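/- arXiv:1202.5218 — 4 statements merged into one kernel-verified Lean document; each statement's English description precedes it below -/
import Mathlib

section
/- Let 1 < p < 5, let Q be the one-dimensional ground state and β∞ = √((5−p)/(p+3)). Consider the 4×4 real matrix M with rows: row 1 = ((Q', yQ), (ΛQ, yQ), 0, 0); row 2 = ((Q', Q), (ΛQ, Q), 0, 0); row 3 = (−β∞(Q, Q'), −β∞(yQ, Q'), (yQ, Q'), −(Q, Q')); row 4 = (−β∞(Q, ΛQ), −β∞(yQ, ΛQ), (yQ, ΛQ), −(Q, ΛQ)). Then det M = −(1/16)·((5−p)/(p−1))²·(∫_ℝ Q²)⁴; in particular det M ≠ 0. -/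
open MeasureTheory Real

/-- The one-dimensional ground state. -/
noncomputable def Q (p : ℝ) (x : ℝ) : ℝ :=
  ((p + 1) / (2 * Real.cosh ((p - 1) / 2 * x) ^ 2)) ^ (1 / (p - 1))

/-- The one-dimensional scalar product `(f,g) = ∫ f g`. -/
noncomputable def sp (f g : ℝ → ℝ) : ℝ := ∫ y : ℝ, f y * g y

/-- `Q' = dQ/dy`. -/
noncomputable def Qd (p : ℝ) : ℝ → ℝ := deriv (Q p)

/-- `ΛQ = (2/(p-1)) Q + y Q'`. -/
noncomputable def LamQ (p : ℝ) : ℝ → ℝ := fun y => 2 / (p - 1) * Q p y + y * deriv (Q p) y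

/-- `yQ : y ↦ y Q(y)`. -/
noncomputable def yQ (p : ℝ) : ℝ → ℝ := fun y => y * Q p y

/-- The 4×4 Jacobian matrix of the modulation map. -/
noncomputable def Mmat (p βinf : ℝ) : Matrix (Fin 4) (Fin 4) ℝ :=
  !![sp (Qd p) (yQ p),          sp (LamQ p) (yQ p),          0,                  0;
     sp (Qd p) (Q p),           sp (LamQ p) (Q p),           0,                  0;
     -βinf * sp (Q p) (Qd p),   -βinf * sp (yQ p) (Qd p),    sp (yQ p) (Qd p),   -(sp (Q p) (Qd p));
     -βinf * sp (Q p) (LamQ p), -βinf * sp (yQ p) (LamQ p),  sp (yQ p) (LamQ p), -(sp (Q p) (LamQ p))]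

set_option linter.unusedSectionVars false

namespace Stmt9Aux

open Set

lemma abs_tanh_le (t : ℝ) : |Real.tanh t| ≤ 1 := by
  rw [Real.tanh_eq_sinh_div_cosh, abs_div, abs_of_pos (Real.cosh_pos t)]
  rw [div_le_one (Real.cosh_pos t), Real.abs_sinh]
  have h : Real.cosh |t| = Real.cosh t := by
    rcases abs_cases t with ⟨h,_⟩|⟨h,_⟩ <;> rw [h] <;> simp [Real.cosh_neg]
  calc Real.sinh |t| ≤ Real.cosh |t| := (Real.sinh_lt_cosh _).le
    _ = Real.cosh t := h

lemma tanh_cont : Continuous Real.tanh := by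
  have : Real.tanh = fun x => Real.sinh x / Real.cosh x := funext Real.tanh_eq_sinh_div_cosh
  rw [this]
  exact Real.continuous_sinh.div Real.continuous_cosh fun x => (Real.cosh_pos x).ne'

lemma integrable_exp_neg_abs' : Integrable (fun y : ℝ => Real.exp (-|y|)) := by
  have h1 : IntegrableOn (fun y : ℝ => Real.exp (-|y|)) (Ioi 0) := by
    refine (exp_neg_integrableOn_Ioi 0 one_pos).congr_fun ?_ measurableSet_Ioi
    intro x hx
    simp [abs_of_pos (Set.mem_Ioi.mp hx)]
  have h2 : IntegrableOn (fun y : ℝ => Real.exp (-|y|)) (Iic 0) := by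
    rw [← Measure.map_neg_eq_self (volume : Measure ℝ)]
    have m : MeasurableEmbedding fun x : ℝ => -x :=
      (Homeomorph.neg ℝ).measurableEmbedding
    rw [m.integrableOn_map_iff]
    simp_rw [Function.comp_def, abs_neg, neg_preimage, neg_Iic, neg_zero]
    exact Iff.mpr integrableOn_Ici_iff_integrableOn_Ioi h1
  have := h2.union h1
  rwa [Iic_union_Ioi, integrableOn_univ] at this

lemma integrable_of_exp_bound {f : ℝ → ℝ} (hc : Continuous f) {K : ℝ}
    (hb : ∀ y, |f y| ≤ K * Real.exp (-|y|)) : Integrable f := by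
  refine Integrable.mono' (integrable_exp_neg_abs'.const_mul K) hc.aestronglyMeasurable ?_
  exact Filter.Eventually.of_forall fun y => by simpa [Real.norm_eq_abs] using hb y

lemma integral_odd {f : ℝ → ℝ} (h : ∀ y, f (-y) = -f y) : ∫ y, f y = 0 := by
  have h2 : ∫ y : ℝ, f (-y) = ∫ y : ℝ, f y := integral_neg_eq_self f volume
  have h3 : ∫ y : ℝ, f (-y) = -∫ y : ℝ, f y := by
    simp_rw [h]; exact integral_neg f
  linarith [h2, h3]

lemma poly_exp_bound (y : ℝ) : |y| ≤ Real.exp |y| ∧ y ^ 2 ≤ 4 * Real.exp |y| := by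
  have h1 : |y| ≤ Real.exp |y| := by linarith [Real.add_one_le_exp |y|, abs_nonneg y]
  constructor
  · exact h1
  · have h2 : |y| / 2 ≤ Real.exp (|y| / 2) := by
      linarith [Real.add_one_le_exp (|y| / 2), abs_nonneg y]
    have h3 : (|y| / 2) ^ 2 ≤ Real.exp (|y| / 2) ^ 2 := by
      apply sq_le_sq' <;> nlinarith [abs_nonneg y, Real.exp_pos (|y| / 2)]
    have h4 : Real.exp (|y| / 2) ^ 2 = Real.exp |y| := by
      rw [← Real.exp_nat_mul]; norm_num; ring_nf
    have h5 : (|y| / 2) ^ 2 = y ^ 2 / 4 := by rw [div_pow, sq_abs]; norm_num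
    nlinarith

section
variable {p : ℝ} (hp1 : 1 < p)
include hp1

lemma Q_eq (x : ℝ) :
    Q p x = ((p + 1) / 2) ^ (1 / (p - 1)) *
      Real.cosh ((p - 1) / 2 * x) ^ (-(2 * (1 / (p - 1)))) := by
  have hc : (0:ℝ) < Real.cosh ((p - 1) / 2 * x) := Real.cosh_pos _
  have hp : (0:ℝ) < (p + 1) / 2 := by linarith
  rw [Q, show (p + 1) / (2 * Real.cosh ((p - 1) / 2 * x) ^ 2)
      = ((p + 1) / 2) * (Real.cosh ((p - 1) / 2 * x) ^ (2:ℕ))⁻¹ by ring,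
    Real.mul_rpow hp.le (by positivity), ← Real.rpow_natCast (Real.cosh ((p-1)/2*x)) 2,
    ← Real.rpow_neg_one, ← Real.rpow_mul hc.le, ← Real.rpow_mul hc.le]
  norm_num

lemma Q_pos (x : ℝ) : 0 < Q p x := by
  rw [Q_eq hp1]
  have hc : (0:ℝ) < Real.cosh ((p - 1) / 2 * x) := Real.cosh_pos _
  have hp : (0:ℝ) < (p + 1) / 2 := by linarith
  positivity

lemma Q_even (x : ℝ) : Q p (-x) = Q p x := by
  rw [Q_eq hp1, Q_eq hp1, mul_neg, Real.cosh_neg]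

lemma hasDerivAt_Q (x : ℝ) :
    HasDerivAt (Q p) (-Real.tanh ((p - 1) / 2 * x) * Q p x) x := by
  have hp0 : p - 1 ≠ 0 := by intro h; linarith [hp1]
  have hc : (0:ℝ) < Real.cosh ((p - 1) / 2 * x) := Real.cosh_pos _
  have h1 : HasDerivAt (fun y : ℝ => (p - 1) / 2 * y) ((p - 1) / 2) x := by
    simpa using (hasDerivAt_id x).const_mul ((p - 1) / 2)
  have h3 : HasDerivAt (fun y : ℝ => Real.cosh ((p - 1) / 2 * y))
      (Real.sinh ((p - 1) / 2 * x) * ((p - 1) / 2)) x :=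
    (Real.hasDerivAt_cosh _).comp x h1
  have h4 : HasDerivAt (fun t : ℝ => t ^ (-(2 * (1 / (p - 1)))))
      ((-(2 * (1 / (p - 1)))) * (Real.cosh ((p - 1) / 2 * x)) ^ (-(2 * (1 / (p - 1))) - 1))
      (Real.cosh ((p - 1) / 2 * x)) :=
    Real.hasDerivAt_rpow_const (Or.inl hc.ne')
  have h5 := ((h4.comp x h3).const_mul (((p + 1) / 2) ^ (1 / (p - 1))))
  have hQfun : Q p = fun y => ((p + 1) / 2) ^ (1 / (p - 1)) *
      Real.cosh ((p - 1) / 2 * y) ^ (-(2 * (1 / (p - 1)))) := funext (Q_eq hp1)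
  rw [hQfun]
  refine h5.congr_deriv ?_
  symm
  rw [Real.tanh_eq_sinh_div_cosh,
    show -(2 * (1 / (p - 1))) - 1 = -(2 * (1 / (p - 1))) + (-1) by ring,
    Real.rpow_add hc, Real.rpow_neg_one]
  field_simp

lemma Q_le (x : ℝ) : Q p x ≤
    ((p + 1) / 2) ^ (1 / (p - 1)) * 2 ^ (2 * (1 / (p - 1))) * Real.exp (-|x|) := by
  have hp0 : p - 1 ≠ 0 := by intro h; linarith
  set k := (p - 1) / 2 with hk
  set r := 1 / (p - 1) with hr
  have hkpos : 0 < k := by rw [hk]; linarith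
  have hrpos : 0 < r := by rw [hr]; exact one_div_pos.mpr (by linarith)
  have hc : (0:ℝ) < Real.cosh (k * x) := Real.cosh_pos _
  have hlow : Real.exp (k * |x|) / 2 ≤ Real.cosh (k * x) := by
    rw [Real.cosh_eq]
    rcases abs_cases x with ⟨h, _⟩ | ⟨h, _⟩
    · rw [h]; have := (Real.exp_pos (-(k * x))).le; linarith
    · rw [h, mul_neg, ← neg_mul]; have := (Real.exp_pos (k * x)).le; linarith
  have hmono := Real.rpow_le_rpow_of_nonpos (by positivity) hlow
    (by nlinarith : -(2 * r) ≤ 0)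
  have heq : (Real.exp (k * |x|) / 2) ^ (-(2 * r)) = 2 ^ (2 * r) * Real.exp (-|x|) := by
    rw [Real.div_rpow (Real.exp_pos _).le (by norm_num),
      ← Real.exp_one_rpow (k * |x|), ← Real.rpow_mul (by positivity),
      Real.exp_one_rpow, Real.rpow_neg (by norm_num : (0:ℝ) ≤ 2),
      div_eq_mul_inv, inv_inv, mul_comm]
    congr 1
    · rw [show k * |x| * -(2 * r) = -|x| * (2 * r * k) by ring,
        show 2 * r * k = 1 by rw [hr, hk]; field_simp]
      norm_num
  rw [Q_eq hp1, ← hk, ← hr, mul_assoc]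
  refine mul_le_mul_of_nonneg_left ?_ (by positivity)
  calc Real.cosh (k * x) ^ (-(2*r)) ≤ (Real.exp (k * |x|) / 2) ^ (-(2 * r)) := hmono
    _ = 2 ^ (2 * r) * Real.exp (-|x|) := heq

lemma Q_cont : Continuous (Q p) :=
  continuous_iff_continuousAt.2 fun x => (hasDerivAt_Q hp1 x).differentiableAt.continuousAt

lemma Qd_eq (x : ℝ) : deriv (Q p) x = -Real.tanh ((p - 1) / 2 * x) * Q p x :=
  (hasDerivAt_Q hp1 x).deriv

lemma Qd_cont : Continuous (deriv (Q p)) := by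
  have : deriv (Q p) = fun x => -Real.tanh ((p - 1) / 2 * x) * Q p x :=
    funext (Qd_eq hp1)
  rw [this]
  exact ((tanh_cont.comp (continuous_const.mul continuous_id)).neg).mul (Q_cont hp1)

lemma Qd_odd (x : ℝ) : deriv (Q p) (-x) = -deriv (Q p) x := by
  rw [Qd_eq hp1, Qd_eq hp1, mul_neg, Real.tanh_neg, Q_even hp1]
  ring

lemma int_master (g : ℝ → ℝ) (hg : Continuous g)
    (hb : ∀ y, |g y| ≤ (1 + y ^ 2) * Q p y ^ 2) : Integrable g := by
  set A := ((p + 1) / 2) ^ (1 / (p - 1)) * 2 ^ (2 * (1 / (p - 1))) with hA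
  have hA0 : 0 < A := by
    rw [hA]
    have : (0:ℝ) < (p + 1) / 2 := by linarith
    positivity
  refine integrable_of_exp_bound hg (K := 5 * A ^ 2) fun y => ?_
  have hQ := Q_le hp1 y
  have hQ0 := (Q_pos hp1 y).le
  have he : (0:ℝ) < Real.exp (-|y|) := Real.exp_pos _
  have hEe : Real.exp (-|y|) * Real.exp |y| = 1 := by
    rw [← Real.exp_add]; simp
  have hQA : Q p y ≤ A * Real.exp (-|y|) := hQ
  have hQ2 : Q p y ^ 2 ≤ A ^ 2 * (Real.exp (-|y|)) ^ 2 := by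
    calc Q p y ^ 2 ≤ (A * Real.exp (-|y|)) ^ 2 := pow_le_pow_left₀ hQ0 hQA 2
      _ = A ^ 2 * (Real.exp (-|y|)) ^ 2 := by ring
  obtain ⟨hy1, hy2⟩ := poly_exp_bound y
  have he1 : Real.exp (-|y|) ≤ 1 := by
    rw [Real.exp_le_one_iff]; simp [abs_nonneg]
  calc |g y| ≤ (1 + y ^ 2) * Q p y ^ 2 := hb y
    _ ≤ (1 + y ^ 2) * (A ^ 2 * (Real.exp (-|y|)) ^ 2) :=
        mul_le_mul_of_nonneg_left hQ2 (by nlinarith [sq_nonneg y])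
    _ ≤ 5 * A ^ 2 * Real.exp (-|y|) := by
        have key : (1 + y ^ 2) * (Real.exp (-|y|)) ^ 2 ≤ 5 * Real.exp (-|y|) := by
          nlinarith [mul_le_mul_of_nonneg_right hy2 (mul_pos he he).le, hEe, he1, he.le,
            mul_le_mul_of_nonneg_right he1 he.le]
        nlinarith [sq_nonneg A, he.le]

lemma abs_QD_le (y : ℝ) : |Q p y * deriv (Q p) y| ≤ Q p y ^ 2 := by
  rw [Qd_eq hp1]
  have h1 := abs_tanh_le ((p - 1) / 2 * y)
  have h2 := (Q_pos hp1 y).le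
  calc |Q p y * (-Real.tanh ((p - 1) / 2 * y) * Q p y)|
      = |Real.tanh ((p - 1) / 2 * y)| * Q p y ^ 2 := by
        rw [abs_mul, abs_mul, abs_neg, abs_of_nonneg h2]
        ring
    _ ≤ 1 * Q p y ^ 2 := by nlinarith [sq_nonneg (Q p y)]
    _ = Q p y ^ 2 := one_mul _

lemma int_Q2 : Integrable (fun y => Q p y ^ 2) :=
  int_master hp1 _ ((Q_cont hp1).pow 2)
    (fun y => by
      rw [abs_of_nonneg (by positivity : (0:ℝ) ≤ Q p y ^ 2)]
      nlinarith [sq_nonneg (Q p y), sq_nonneg y])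

lemma int_yQ2 : Integrable (fun y => y * Q p y ^ 2) :=
  int_master hp1 _ (continuous_id.mul ((Q_cont hp1).pow 2))
    (fun y => by
      rw [abs_mul, abs_of_nonneg (by positivity : (0:ℝ) ≤ Q p y ^ 2)]
      nlinarith [sq_nonneg (Q p y), sq_nonneg y, sq_abs y, abs_nonneg y,
        sq_nonneg (1 - |y|)])

lemma int_y2Q2 : Integrable (fun y => y ^ 2 * Q p y ^ 2) :=
  int_master hp1 _ ((continuous_id.pow 2).mul ((Q_cont hp1).pow 2))
    (fun y => by
      rw [abs_mul, abs_of_nonneg (by positivity : (0:ℝ) ≤ Q p y ^ 2),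
        abs_of_nonneg (sq_nonneg y)]
      nlinarith [sq_nonneg (Q p y), sq_nonneg y])

lemma int_QD : Integrable (fun y => Q p y * deriv (Q p) y) :=
  int_master hp1 _ ((Q_cont hp1).mul (Qd_cont hp1))
    (fun y => by
      refine (abs_QD_le hp1 y).trans ?_
      nlinarith [sq_nonneg (Q p y), sq_nonneg y])

lemma int_yQD : Integrable (fun y => y * (Q p y * deriv (Q p) y)) :=
  int_master hp1 _ (continuous_id.mul ((Q_cont hp1).mul (Qd_cont hp1)))
    (fun y => by
      rw [abs_mul]
      calc |y| * |Q p y * deriv (Q p) y| ≤ |y| * Q p y ^ 2 :=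
            mul_le_mul_of_nonneg_left (abs_QD_le hp1 y) (abs_nonneg y)
        _ ≤ (1 + y ^ 2) * Q p y ^ 2 := by
            nlinarith [sq_nonneg (Q p y), sq_abs y, sq_nonneg (1 - |y|), abs_nonneg y]
      )

lemma int_y2QD : Integrable (fun y => y ^ 2 * (Q p y * deriv (Q p) y)) :=
  int_master hp1 _ ((continuous_id.pow 2).mul ((Q_cont hp1).mul (Qd_cont hp1)))
    (fun y => by
      rw [abs_mul, abs_of_nonneg (sq_nonneg y)]
      calc y ^ 2 * |Q p y * deriv (Q p) y| ≤ y ^ 2 * Q p y ^ 2 :=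
            mul_le_mul_of_nonneg_left (abs_QD_le hp1 y) (sq_nonneg y)
        _ ≤ (1 + y ^ 2) * Q p y ^ 2 := by nlinarith [sq_nonneg (Q p y)]
      )

lemma eqn_QD : ∫ y : ℝ, Q p y * deriv (Q p) y = 0 :=
  integral_odd fun y => by rw [Q_even hp1, Qd_odd hp1]; ring

lemma eqn_yQ2 : ∫ y : ℝ, y * Q p y ^ 2 = 0 :=
  integral_odd fun y => by rw [Q_even hp1]; ring

lemma hasDerivAt_Q2 (y : ℝ) :
    HasDerivAt (fun y => Q p y ^ 2) (2 * (Q p y * deriv (Q p) y)) y := by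
  have h := (hasDerivAt_Q hp1 y).pow 2
  refine h.congr_deriv ?_
  symm
  rw [← Qd_eq hp1]
  push_cast
  ring

lemma eqn_yQD : ∫ y : ℝ, y * (Q p y * deriv (Q p) y)
    = -(∫ y : ℝ, Q p y ^ 2) / 2 := by
  have hderiv : ∀ y : ℝ, HasDerivAt (fun y => y * Q p y ^ 2)
      (Q p y ^ 2 + 2 * (y * (Q p y * deriv (Q p) y))) y := by
    intro y
    have h := (hasDerivAt_id y).mul (hasDerivAt_Q2 hp1 y)
    refine h.congr_deriv ?_
    symm
    simp [id]
    ring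
  have hint : Integrable (fun y : ℝ =>
      Q p y ^ 2 + 2 * (y * (Q p y * deriv (Q p) y))) :=
    (int_Q2 hp1).add ((int_yQD hp1).const_mul 2)
  have h0 := integral_eq_zero_of_hasDerivAt_of_integrable hderiv hint (int_yQ2 hp1)
  rw [integral_add (int_Q2 hp1) ((int_yQD hp1).const_mul 2), integral_const_mul] at h0
  linarith

lemma eqn_y2QD : ∫ y : ℝ, y ^ 2 * (Q p y * deriv (Q p) y) = 0 := by
  have hderiv : ∀ y : ℝ, HasDerivAt (fun y => y ^ 2 * Q p y ^ 2)
      (2 * (y * Q p y ^ 2) + 2 * (y ^ 2 * (Q p y * deriv (Q p) y))) y := by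
    intro y
    have h := ((hasDerivAt_id y).pow 2).mul (hasDerivAt_Q2 hp1 y)
    refine h.congr_deriv ?_
    symm
    simp [id]
    ring
  have hint : Integrable (fun y : ℝ =>
      2 * (y * Q p y ^ 2) + 2 * (y ^ 2 * (Q p y * deriv (Q p) y))) :=
    ((int_yQ2 hp1).const_mul 2).add ((int_y2QD hp1).const_mul 2)
  have h0 := integral_eq_zero_of_hasDerivAt_of_integrable hderiv hint (int_y2Q2 hp1)
  rw [integral_add ((int_yQ2 hp1).const_mul 2) ((int_y2QD hp1).const_mul 2),
    integral_const_mul, integral_const_mul, eqn_yQ2 hp1] at h0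
  linarith

end

end Stmt9Aux
namespace Stmt9Aux
section
variable {p : ℝ} (hp1 : 1 < p)
include hp1

lemma sp_comm (f g : ℝ → ℝ) : sp f g = sp g f := by
  rw [sp, sp]
  congr 1
  funext y
  ring

lemma sp_Qd_yQ : sp (Qd p) (yQ p) = -(∫ y : ℝ, Q p y ^ 2) / 2 := by
  have h : sp (Qd p) (yQ p) = ∫ y : ℝ, y * (Q p y * deriv (Q p) y) := by
    rw [sp]
    congr 1
    funext y
    rw [Qd, yQ]
    ring
  rw [h, eqn_yQD hp1]

lemma sp_LamQ_yQ : sp (LamQ p) (yQ p) = 0 := by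
  have h : sp (LamQ p) (yQ p) = ∫ y : ℝ,
      (2 / (p - 1) * (y * Q p y ^ 2) + y ^ 2 * (Q p y * deriv (Q p) y)) := by
    rw [sp]
    congr 1
    funext y
    rw [LamQ, yQ]
    ring
  rw [h, integral_add ((int_yQ2 hp1).const_mul _) (int_y2QD hp1),
    integral_const_mul, eqn_yQ2 hp1, eqn_y2QD hp1]
  ring

lemma sp_Qd_Q : sp (Qd p) (Q p) = 0 := by
  have h : sp (Qd p) (Q p) = ∫ y : ℝ, Q p y * deriv (Q p) y := by
    rw [sp]
    congr 1
    funext y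
    rw [Qd]
    ring
  rw [h, eqn_QD hp1]

lemma sp_LamQ_Q : sp (LamQ p) (Q p)
    = (5 - p) / (2 * (p - 1)) * ∫ y : ℝ, Q p y ^ 2 := by
  have h : sp (LamQ p) (Q p) = ∫ y : ℝ,
      (2 / (p - 1) * Q p y ^ 2 + y * (Q p y * deriv (Q p) y)) := by
    rw [sp]
    congr 1
    funext y
    rw [LamQ]
    ring
  have hp0 : p - 1 ≠ 0 := by intro h'; linarith
  rw [h, integral_add ((int_Q2 hp1).const_mul _) (int_yQD hp1),
    integral_const_mul, eqn_yQD hp1]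
  field_simp
  ring

end
end Stmt9Aux
open Stmt9Aux in
/-- `det M = -(1/16)((5-p)/(p-1))² (∫ Q²)⁴ ≠ 0`. -/
theorem stmt9 (p : ℝ) (hp1 : 1 < p) (hp5 : p < 5)
    (βinf : ℝ) (hβ : βinf = Real.sqrt ((5 - p) / (p + 3))) :
    (Mmat p βinf).det
        = -(1 / 16) * ((5 - p) / (p - 1)) ^ 2 * (∫ y : ℝ, (Q p y) ^ 2) ^ 4 ∧
    (Mmat p βinf).det ≠ 0 := by
  have hp0 : p - 1 ≠ 0 := by intro h; linarith
  set I : ℝ := ∫ y : ℝ, Q p y ^ 2 with hI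
  have hIpos : 0 < I := by
    rw [hI]
    rw [integral_pos_iff_support_of_nonneg (fun y => sq_nonneg (Q p y)) (int_Q2 hp1)]
    have hs : Function.support (fun y => Q p y ^ 2) = Set.univ :=
      Set.eq_univ_iff_forall.mpr fun y => Function.mem_support.mpr
        (by have := Q_pos hp1 y; positivity)
    rw [hs]
    simp
  have e1 : sp (Qd p) (yQ p) = -I / 2 := sp_Qd_yQ hp1
  have e2 : sp (LamQ p) (yQ p) = 0 := sp_LamQ_yQ hp1
  have e3 : sp (Qd p) (Q p) = 0 := sp_Qd_Q hp1
  have e4 : sp (LamQ p) (Q p) = (5 - p) / (2 * (p - 1)) * I := sp_LamQ_Q hp1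
  have e5 : sp (Q p) (Qd p) = 0 := by rw [sp_comm hp1]; exact e3
  have e6 : sp (yQ p) (Qd p) = -I / 2 := by rw [sp_comm hp1]; exact e1
  have e7 : sp (Q p) (LamQ p) = (5 - p) / (2 * (p - 1)) * I := by
    rw [sp_comm hp1]; exact e4
  have e8 : sp (yQ p) (LamQ p) = 0 := by rw [sp_comm hp1]; exact e2
  have hdet : (Mmat p βinf).det
      = -(1 / 16) * ((5 - p) / (p - 1)) ^ 2 * I ^ 4 := by
    rw [Mmat]
    rw [e1, e2, e3, e4, e5, e6, e7, e8]
    simp [Matrix.det_succ_row_zero, Fin.sum_univ_succ]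
    field_simp
    ring
  refine ⟨hdet, ?_⟩
  rw [hdet]
  have h5 : (5 - p) / (p - 1) ≠ 0 := by
    apply div_ne_zero <;> intro h <;> [linarith; linarith]
  have : 0 < (1 / 16 : ℝ) * ((5 - p) / (p - 1)) ^ 2 * I ^ 4 := by positivity
  linarith
end

section
/- (ODE comparison lemma underlying Theorem 1.) Let 0 < α < 1, T ∈ ℝ, C > 0, t₀ < T, and let g : [t₀, T) → [0, ∞) be differentiable and satisfy g(t) ≤ C·(T−t)^{2α/(1+α)} − (T−t)·g'(t) for all t ∈ [t₀, T). Then there exist a constant C' > 0 and a time t₁ ∈ [t₀, T) such that g(t) ≤ C'·(T−t)^{2α/(1+α)} for all t ∈ [t₁, T). -/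
open Set

/-- ODE comparison lemma underlying Theorem 1: if `0 < α < 1`, `g ≥ 0`
is differentiable on `[t₀, T)` and satisfies
`g(t) ≤ C (T-t)^{2α/(1+α)} - (T-t) g'(t)`, then for some `C' > 0` and `t₁ ∈ [t₀, T)`,
`g(t) ≤ C' (T-t)^{2α/(1+α)}` on `[t₁, T)`. -/
theorem stmt13 (α T t₀ C : ℝ) (hα0 : 0 < α) (hα1 : α < 1) (hC : 0 < C) (ht₀ : t₀ < T)
    (g : ℝ → ℝ)
    (hg0 : ∀ t ∈ Set.Ico t₀ T, 0 ≤ g t)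
    (hgd : ∀ t ∈ Set.Ico t₀ T, HasDerivAt g (deriv g t) t)
    (hineq : ∀ t ∈ Set.Ico t₀ T,
      g t ≤ C * (T - t) ^ (2 * α / (1 + α)) - (T - t) * deriv g t) :
    ∃ (C' t₁ : ℝ), 0 < C' ∧ t₁ ∈ Set.Ico t₀ T ∧
      ∀ t ∈ Set.Ico t₁ T, g t ≤ C' * (T - t) ^ (2 * α / (1 + α)) := by
  have h1α : (0:ℝ) < 1 + α := by linarith
  set b : ℝ := 2 * α / (1 + α) with hbdef
  have hb0 : 0 < b := div_pos (by linarith) h1α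
  have hb1 : b < 1 := by rw [hbdef, div_lt_one h1α]; linarith
  have h1b : 0 < 1 - b := by linarith
  have hT0 : 0 < T - t₀ := by linarith
  set F : ℝ → ℝ := fun t => g t / (T - t) - (C / (1 - b)) * (T - t) ^ (b - 1) with hFdef
  have hFd : ∀ t ∈ Set.Ico t₀ T, HasDerivAt F
      ((deriv g t * (T - t) - g t * (-1)) / (T - t) ^ 2
        - (C / (1 - b)) * ((-1) * (b - 1) * (T - t) ^ (b - 1 - 1))) t := by
    intro t ht
    have hTt : 0 < T - t := by linarith [ht.2]
    have hu : HasDerivAt (fun x : ℝ => T - x) (-1) t := by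
      simpa using (hasDerivAt_id t).const_sub T
    have h1 : HasDerivAt (fun x => g x / (T - x))
        ((deriv g t * (T - t) - g t * (-1)) / (T - t) ^ 2) t :=
      (hgd t ht).div hu hTt.ne'
    have h2 : HasDerivAt (fun x : ℝ => (T - x) ^ (b - 1))
        ((-1) * (b - 1) * (T - t) ^ (b - 1 - 1)) t :=
      hu.rpow_const (Or.inl hTt.ne')
    exact h1.sub (h2.const_mul (C / (1 - b)))
  have hFanti : AntitoneOn F (Set.Ico t₀ T) := by
    apply antitoneOn_of_deriv_nonpos (convex_Ico t₀ T)
    · intro t ht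
      exact ((hFd t ht).continuousAt).continuousWithinAt
    · rw [interior_Ico]
      intro t ht
      exact ((hFd t ⟨le_of_lt ht.1, ht.2⟩)).differentiableAt.differentiableWithinAt
    · rw [interior_Ico]
      intro t ht
      have ht' : t ∈ Set.Ico t₀ T := ⟨le_of_lt ht.1, ht.2⟩
      rw [(hFd t ht').deriv]
      have hTt : 0 < T - t := by linarith [ht.2]
      have key : g t + (T - t) * deriv g t ≤ C * (T - t) ^ b := by
        have := hineq t ht'; linarith
      have hrw : (T - t) ^ (b - 1 - 1) = (T - t) ^ b / (T - t) ^ 2 := by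
        rw [show b - 1 - 1 = b - 2 by ring]
        rw [show (T - t) ^ (2:ℕ) = (T - t) ^ (2:ℝ) by
          rw [← Real.rpow_natCast (T - t) 2]; norm_num]
        rw [← Real.rpow_sub hTt]
      have hsimp : (C / (1 - b)) * ((-1) * (b - 1) * (T - t) ^ (b - 1 - 1))
          = C * (T - t) ^ (b - 1 - 1) := by
        field_simp
        ring
      rw [hsimp, hrw, sub_nonpos, ← mul_div_assoc]
      gcongr
      linarith
  -- now conclude
  refine ⟨g t₀ / (T - t₀) * (T - t₀) ^ (1 - b) + C / (1 - b), t₀, ?_, ⟨le_refl t₀, ht₀⟩, ?_⟩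
  · have h0 : 0 ≤ g t₀ / (T - t₀) * (T - t₀) ^ (1 - b) := by
      have := hg0 t₀ ⟨le_refl t₀, ht₀⟩
      positivity
    have : 0 < C / (1 - b) := by positivity
    linarith
  · intro t ht
    have hTt : 0 < T - t := by linarith [ht.2]
    have hle : F t ≤ F t₀ := hFanti ⟨le_refl t₀, ht₀⟩ ht ht.1
    have hFt : g t / (T - t) ≤ g t₀ / (T - t₀) + (C / (1 - b)) * (T - t) ^ (b - 1) := by
      have hpos : 0 ≤ (C / (1 - b)) * (T - t₀) ^ (b - 1) := by positivity
      simp only [hFdef] at hle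
      linarith
    have hmul : g t ≤ (g t₀ / (T - t₀)) * (T - t)
        + (C / (1 - b)) * ((T - t) ^ (b - 1) * (T - t)) := by
      have := mul_le_mul_of_nonneg_right hFt hTt.le
      rw [div_mul_cancel₀ _ hTt.ne'] at this
      linarith [this]
    have hpow1 : (T - t) ^ (b - 1) * (T - t) = (T - t) ^ b := by
      nth_rewrite 2 [show T - t = (T - t) ^ (1:ℝ) by rw [Real.rpow_one]]
      rw [← Real.rpow_add hTt]; norm_num
    have hpow2 : (T - t) ≤ (T - t₀) ^ (1 - b) * (T - t) ^ b := by
      calc (T - t) = (T - t) ^ (1 - b) * (T - t) ^ b := by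
            rw [← Real.rpow_add hTt]; norm_num
        _ ≤ (T - t₀) ^ (1 - b) * (T - t) ^ b :=
            mul_le_mul_of_nonneg_right
              (Real.rpow_le_rpow hTt.le (by linarith [ht.1]) h1b.le) (by positivity)
    have hgt0 : 0 ≤ g t₀ / (T - t₀) := by
      have := hg0 t₀ ⟨le_refl t₀, ht₀⟩; positivity
    calc g t ≤ (g t₀ / (T - t₀)) * (T - t)
        + (C / (1 - b)) * ((T - t) ^ (b - 1) * (T - t)) := hmul
      _ ≤ (g t₀ / (T - t₀)) * ((T - t₀) ^ (1 - b) * (T - t) ^ b)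
          + (C / (1 - b)) * (T - t) ^ b := by
        rw [hpow1]
        exact add_le_add (mul_le_mul_of_nonneg_left hpow2 hgt0) (le_refl _)
      _ = (g t₀ / (T - t₀) * (T - t₀) ^ (1 - b) + C / (1 - b)) * (T - t) ^ b := by ring
end

section
/- (Quadratic remainder estimate for the nonlinearity.) Let 1 < p < 5 and f(u) = u|u|^{p−1} for u ∈ ℂ. There exists a constant C = C(p) such that for all z ∈ ℂ: |f(1+z) − 1 − (((p+1)/2)·z + ((p−1)/2)·z̄)| ≤ C·(|z|² + 𝟙_{p>2}·|z|^p), where 𝟙_{p>2} equals 1 if p > 2 and 0 otherwise. -/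
open Real Set

set_option maxHeartbeats 1000000

private lemma stmt17_lemA {q : ℝ} (hq0 : 0 < q) (hq2 : q < 2) :
    ∀ s ∈ Set.Icc (-(3/4) : ℝ) (9/4 : ℝ), |(1+s)^q - 1 - q*s| ≤ 32 * s^2 := by
  have hI : Convex ℝ (Set.Icc (-(3/4) : ℝ) (9/4 : ℝ)) := convex_Icc _ _
  have h0I : (0:ℝ) ∈ Set.Icc (-(3/4) : ℝ) (9/4 : ℝ) := by constructor <;> norm_num
  have hpos : ∀ t ∈ Set.Icc (-(3/4) : ℝ) (9/4 : ℝ), (1/4 : ℝ) ≤ 1 + t := by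
    intro t ht; linarith [ht.1]
  -- bound on (1+t)^(q-2)
  have hbd2 : ∀ t ∈ Set.Icc (-(3/4) : ℝ) (9/4 : ℝ), (1+t)^(q-2) ≤ 16 := by
    intro t ht
    have h14 := hpos t ht
    have h1 : (1+t)^(q-2) ≤ (1/4 : ℝ)^(q-2) :=
      Real.rpow_le_rpow_of_nonpos (by norm_num) h14 (by linarith)
    have h2 : (1/4 : ℝ)^(q-2) = (4:ℝ)^(2-q) := by
      rw [show (1/4 : ℝ) = 4⁻¹ by norm_num, ← Real.rpow_neg_one (4:ℝ),
        ← Real.rpow_mul (by norm_num : (0:ℝ) ≤ 4)]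
      ring_nf
    have h3 : (4:ℝ)^(2-q) ≤ (4:ℝ)^(2:ℝ) :=
      Real.rpow_le_rpow_of_exponent_le (by norm_num) (by linarith)
    have h4 : (4:ℝ)^(2:ℝ) = 16 := by
      rw [show (2:ℝ) = ((2:ℕ):ℝ) by norm_num, Real.rpow_natCast]; norm_num
    linarith
  -- step 1 : |(1+t)^(q-1) - 1| ≤ 16 |t|
  have step1 : ∀ t ∈ Set.Icc (-(3/4) : ℝ) (9/4 : ℝ), |(1+t)^(q-1) - 1| ≤ 16 * |t| := by
    intro t ht
    have hder : ∀ x ∈ Set.Icc (-(3/4) : ℝ) (9/4 : ℝ),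
        HasDerivWithinAt (fun x : ℝ => (1+x)^(q-1)) (1*(q-1)*(1+x)^(q-1-1))
          (Set.Icc (-(3/4) : ℝ) (9/4 : ℝ)) x := by
      intro x hx
      have h1 : (1:ℝ) + x ≠ 0 := by have := hpos x hx; linarith
      exact (((hasDerivAt_id x).const_add 1).rpow_const (Or.inl h1)).hasDerivWithinAt
    have hbound : ∀ x ∈ Set.Icc (-(3/4) : ℝ) (9/4 : ℝ),
        ‖1*(q-1)*(1+x)^(q-1-1)‖ ≤ 16 := by
      intro x hx
      have h1 := hbd2 x hx
      have h2 : (0:ℝ) ≤ (1+x)^(q-1-1) := Real.rpow_nonneg (by linarith [hpos x hx]) _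
      have h3 : (q-1-1) = q - 2 := by ring
      rw [Real.norm_eq_abs, abs_mul, abs_mul, abs_one, one_mul, abs_of_nonneg h2, h3]
      have h4 : |q-1| ≤ 1 := by rw [abs_le]; constructor <;> linarith
      nlinarith [abs_nonneg (q-1)]
    have := hI.norm_image_sub_le_of_norm_hasDerivWithin_le hder hbound h0I ht
    simpa [Real.norm_eq_abs, Real.one_rpow] using this
  -- step 2
  intro s hs
  have hJsub : Set.Icc (min 0 s) (max 0 s) ⊆ Set.Icc (-(3/4) : ℝ) (9/4 : ℝ) := by
    apply Set.Icc_subset_Icc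
    · exact le_min (by norm_num) hs.1
    · exact max_le (by norm_num) hs.2
  have hder : ∀ x ∈ Set.Icc (min 0 s) (max 0 s),
      HasDerivWithinAt (fun x : ℝ => (1+x)^q - 1 - q*x) (1*q*(1+x)^(q-1) - q)
        (Set.Icc (min 0 s) (max 0 s)) x := by
    intro x hx
    have h1 : (1:ℝ) + x ≠ 0 := by have := hpos x (hJsub hx); linarith
    have h2 : HasDerivAt (fun x : ℝ => (1+x)^q) (1*q*(1+x)^(q-1)) x :=
      ((hasDerivAt_id x).const_add 1).rpow_const (Or.inl h1)
    have h4 : HasDerivAt (fun x : ℝ => q*x) q x := by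
      simpa using (hasDerivAt_id x).const_mul q
    exact ((h2.sub_const 1).sub h4).hasDerivWithinAt
  have hbound : ∀ x ∈ Set.Icc (min 0 s) (max 0 s),
      ‖1*q*(1+x)^(q-1) - q‖ ≤ 32 * |s| := by
    intro x hx
    have h1 := step1 x (hJsub hx)
    have hxs : |x| ≤ |s| := by
      rcases hx with ⟨hx1, hx2⟩
      rcases le_or_gt 0 s with h | h
      · rw [min_eq_left h, max_eq_right h] at *
        rw [abs_of_nonneg hx1, abs_of_nonneg h]; exact hx2
      · rw [min_eq_right h.le, max_eq_left h.le] at *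
        rw [abs_of_nonpos hx2, abs_of_nonpos h.le]; linarith
    have : ‖1*q*(1+x)^(q-1) - q‖ = q * |(1+x)^(q-1) - 1| := by
      rw [Real.norm_eq_abs, show 1*q*(1+x)^(q-1) - q = q * ((1+x)^(q-1) - 1) by ring,
        abs_mul, abs_of_pos hq0]
    rw [this]
    nlinarith [abs_nonneg ((1+x)^(q-1) - 1), abs_nonneg x, abs_nonneg s]
  have hmem0 : (0:ℝ) ∈ Set.Icc (min 0 s) (max 0 s) := ⟨min_le_left _ _, le_max_left _ _⟩
  have hmems : s ∈ Set.Icc (min 0 s) (max 0 s) := ⟨min_le_right _ _, le_max_right _ _⟩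
  have := (convex_Icc _ _).norm_image_sub_le_of_norm_hasDerivWithin_le hder hbound hmem0 hmems
  have h0 : (1+(0:ℝ))^q - 1 - q*0 = 0 := by simp [Real.one_rpow]
  rw [h0] at this
  have h2 : |s| * |s| = s^2 := by rw [← abs_mul, abs_mul_self]; ring
  calc |(1+s)^q - 1 - q*s| = ‖(1+s)^q - 1 - q*s - 0‖ := by rw [sub_zero, Real.norm_eq_abs]
    _ ≤ 32 * |s| * ‖s - 0‖ := this
    _ = 32 * s^2 := by rw [sub_zero, Real.norm_eq_abs, mul_assoc, h2]

/-- quadratic remainder estimate for the nonlinearity `f(u) = u|u|^{p-1}`: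
for `1 < p < 5` there is `C = C(p)` with
`|f(1+z) - 1 - (((p+1)/2)z + ((p-1)/2)z̄)| ≤ C(|z|² + 𝟙_{p>2}|z|^p)` for all `z ∈ ℂ`. -/
theorem stmt17 (p : ℝ) (hp1 : 1 < p) (hp5 : p < 5) :
    ∃ C : ℝ, 0 < C ∧ ∀ z : ℂ,
      ‖(1 + z) * ((‖1 + z‖ ^ (p - 1) : ℝ) : ℂ) - 1
          - (((p + 1) / 2 : ℂ) * z + ((p - 1) / 2 : ℂ) * (starRingEnd ℂ z))‖
        ≤ C * (‖z‖ ^ 2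
            + if 2 < p then ‖z‖ ^ p else 0) := by
  set q : ℝ := (p-1)/2 with hqdef
  have hq0 : 0 < q := by rw [hqdef]; linarith
  have hq2 : q < 2 := by rw [hqdef]; linarith
  refine ⟨1000, by norm_num, fun z => ?_⟩
  set r : ℝ := ‖z‖ with hrdef
  have hr0 : 0 ≤ r := norm_nonneg z
  have hite : (0:ℝ) ≤ if 2 < p then r ^ p else 0 := by
    split_ifs
    · exact Real.rpow_nonneg hr0 p
    · exact le_rfl
  rcases le_or_gt r (1/2) with hsmall | hlarge
  · -- small case : |z| ≤ 1/2
    set s : ℝ := 2*z.re + r^2 with hsdef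
    have hre : |z.re| ≤ r := Complex.abs_re_le_norm z
    have hre' : -r ≤ z.re := neg_le_of_abs_le hre
    have hre'' : z.re ≤ r := le_of_abs_le hre
    have hnormSq : Complex.normSq (1+z) = 1 + s := by
      rw [Complex.normSq_add]
      simp [hsdef, ← Complex.sq_norm, hrdef]
      ring
    have h14 : (1/4 : ℝ) ≤ 1 + s := by rw [hsdef]; nlinarith
    have habs : ‖1+z‖ ^ (p-1) = (1+s)^q := by
      rw [Complex.norm_def, hnormSq, Real.sqrt_eq_rpow,
        ← Real.rpow_mul (by linarith : (0:ℝ) ≤ 1+s),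
        show 1/2*(p-1) = q by rw [hqdef]; ring]
    have hr2 : r^2 = z.re^2 + z.im^2 := by
      rw [hrdef, Complex.sq_norm, Complex.normSq_apply]; ring
    have hsC : (s:ℂ) = z + (starRingEnd ℂ) z + z * (starRingEnd ℂ) z := by
      apply Complex.ext <;>
        simp [hsdef, hr2, ← Complex.ofReal_pow, Complex.add_re, Complex.add_im,
          Complex.mul_re, Complex.mul_im] <;> ring
    set E : ℝ := (1+s)^q - 1 - q*s with hEdef
    have hE : |E| ≤ 32 * s^2 := by
      refine stmt17_lemA hq0 hq2 s ⟨by linarith, ?_⟩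
      rw [hsdef]; nlinarith
    have hEeq : ((1+s)^q : ℝ) = 1 + q*s + E := by rw [hEdef]; ring
    have key : (1 + z) * (((1 + q*s + E : ℝ)) : ℂ) - 1
        - (((p + 1) / 2 : ℂ) * z + ((p - 1) / 2 : ℂ) * (starRingEnd ℂ z))
        = (q:ℂ)*(z*(starRingEnd ℂ z)) + (q:ℂ)*(s:ℂ)*z + (1+z)*(E:ℂ) := by
      have hqC : ((q:ℝ):ℂ) = ((p:ℂ)-1)/2 := by rw [hqdef]; push_cast; ring
      push_cast
      rw [hsC, hqC]
      ring
    rw [habs, hEeq, key]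
    clear_value q r s E
    have hsabs : |s| ≤ (5/2) * r := by
      rw [hsdef, abs_le]; constructor <;> nlinarith
    have b1 : ‖(q:ℂ)*(z*(starRingEnd ℂ z))‖ = q * (r * r) := by
      rw [norm_mul, norm_mul, Complex.norm_real, Real.norm_eq_abs, Complex.norm_conj,
        _root_.abs_of_pos hq0, ← hrdef]
    have b2 : ‖(q:ℂ)*(s:ℂ)*z‖ = q * |s| * r := by
      rw [norm_mul, norm_mul, Complex.norm_real, Complex.norm_real, Real.norm_eq_abs,
        Real.norm_eq_abs,
        _root_.abs_of_pos hq0, ← hrdef]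
    have b3 : ‖(1+z)*(E:ℂ)‖ ≤ (1 + r) * |E| := by
      rw [norm_mul, Complex.norm_real, Real.norm_eq_abs]
      have h1z : ‖1 + z‖ ≤ 1 + r := by
        simpa [← hrdef] using norm_add_le (1:ℂ) z
      exact mul_le_mul_of_nonneg_right h1z (abs_nonneg E)
    calc ‖(q:ℂ)*(z*(starRingEnd ℂ z)) + (q:ℂ)*(s:ℂ)*z + (1+z)*(E:ℂ)‖
        ≤ ‖(q:ℂ)*(z*(starRingEnd ℂ z)) + (q:ℂ)*(s:ℂ)*z‖
          + ‖(1+z)*(E:ℂ)‖ := norm_add_le _ _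
      _ ≤ ‖(q:ℂ)*(z*(starRingEnd ℂ z))‖ + ‖(q:ℂ)*(s:ℂ)*z‖
          + ‖(1+z)*(E:ℂ)‖ :=
            add_le_add_left (norm_add_le _ _) _
      _ ≤ q * (r * r) + q * |s| * r + (1 + r) * |E| := by
        rw [b1, b2]
        exact add_le_add_right b3 _
      _ ≤ 1000 * (r ^ 2 + if 2 < p then r ^ p else 0) := by
          clear hsC key habs hEdef hEeq hnormSq b1 b2 b3 hr2 hre hre' hre'' hsdef hqdef hrdef h14 z
          have hs2 : s^2 ≤ (25/4) * r^2 := by nlinarith [abs_nonneg s, sq_abs s]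
          have e1 : q*(r*r) ≤ 2*r^2 := by nlinarith
          have e2 : q * |s| ≤ 2 * (5/2*r) :=
            mul_le_mul hq2.le hsabs (abs_nonneg s) (by norm_num)
          have e2' : q * |s| * r ≤ 5*r^2 := by
            nlinarith [mul_le_mul_of_nonneg_right e2 hr0]
          have e3 : |E| ≤ 200*r^2 := by linarith
          have e4 : (1+r)*|E| ≤ 300*r^2 := by
            nlinarith [mul_le_mul_of_nonneg_right hsmall (abs_nonneg E), abs_nonneg E]
          linarith [sq_nonneg r]
  · -- large case : |z| > 1/2
    clear_value q r
    have hA : ‖(1+z) * ((‖1+z‖ ^ (p-1) : ℝ) : ℂ)‖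
        = ‖1+z‖ ^ p := by
      rw [norm_mul, Complex.norm_real, Real.norm_eq_abs,
        _root_.abs_of_nonneg (Real.rpow_nonneg (norm_nonneg _) _),
        ← Real.rpow_one_add' (norm_nonneg _) (by linarith : 1 + (p-1) ≠ 0)]
      ring_nf
    have hA2 : ‖1+z‖ ^ p ≤ 243 * r^p := by
      have h1z : ‖1+z‖ ≤ 3*r := by
        have := norm_add_le (1:ℂ) z
        simp only [norm_one] at this
        rw [← hrdef] at this
        linarith
      calc ‖1+z‖ ^ p ≤ (3*r)^p :=
            Real.rpow_le_rpow (norm_nonneg _) h1z (by linarith)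
        _ = 3^p * r^p := Real.mul_rpow (by norm_num) hr0
        _ ≤ 243 * r^p := by
            have h3 : (3:ℝ)^p ≤ (3:ℝ)^(5:ℝ) :=
              Real.rpow_le_rpow_of_exponent_le (by norm_num) (by linarith)
            have h4 : (3:ℝ)^(5:ℝ) = 243 := by
              rw [show (5:ℝ) = ((5:ℕ):ℝ) by norm_num, Real.rpow_natCast]; norm_num
            have h5 : (0:ℝ) ≤ r^p := Real.rpow_nonneg hr0 p
            nlinarith
    have hB : ‖((p + 1) / 2 : ℂ) * z + ((p - 1) / 2 : ℂ) * (starRingEnd ℂ z)‖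
        ≤ p * r := by
      calc ‖((p + 1) / 2 : ℂ) * z + ((p - 1) / 2 : ℂ) * (starRingEnd ℂ z)‖
          ≤ ‖((p + 1) / 2 : ℂ) * z‖
            + ‖((p - 1) / 2 : ℂ) * (starRingEnd ℂ z)‖ := norm_add_le _ _
        _ = ‖((p + 1) / 2 : ℂ)‖ * r + ‖((p - 1) / 2 : ℂ)‖ * r := by
            rw [norm_mul, norm_mul, Complex.norm_conj, ← hrdef]
        _ ≤ p * r := by
            have h1 : ((p + 1) / 2 : ℂ) = (((p+1)/2 : ℝ) : ℂ) := by push_cast; ring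
            have h2 : ((p - 1) / 2 : ℂ) = (((p-1)/2 : ℝ) : ℂ) := by push_cast; ring
            rw [h1, h2, Complex.norm_real, Complex.norm_real, Real.norm_eq_abs,
              Real.norm_eq_abs,
              _root_.abs_of_pos (by linarith), _root_.abs_of_pos (by linarith)]
            nlinarith
    have htri : ‖(1 + z) * ((‖1 + z‖ ^ (p - 1) : ℝ) : ℂ) - 1
          - (((p + 1) / 2 : ℂ) * z + ((p - 1) / 2 : ℂ) * (starRingEnd ℂ z))‖
        ≤ 243 * r^p + 1 + p * r := by
      set A : ℂ := (1 + z) * ((‖1 + z‖ ^ (p - 1) : ℝ) : ℂ) with hAdef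
      set B : ℂ := ((p + 1) / 2 : ℂ) * z + ((p - 1) / 2 : ℂ) * (starRingEnd ℂ z) with hBdef
      have h1 : A - 1 - B = A + (-1 + -B) := by ring
      rw [h1]
      calc ‖A + (-1 + -B)‖ ≤ ‖A‖ + ‖-1 + -B‖ :=
            norm_add_le _ _
        _ ≤ ‖A‖ + (‖(-1 : ℂ)‖ + ‖-B‖) := by
            linarith [norm_add_le (-1 : ℂ) (-B)]
        _ = ‖A‖ + 1 + ‖B‖ := by simp; ring
        _ ≤ 243 * r^p + 1 + p * r := by
            rw [hAdef, hBdef] at *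
            linarith [hA ▸ hA2, hB]
    have h1r : (1:ℝ) ≤ 4 * r^2 := by nlinarith
    have hpr : p * r ≤ 10 * r^2 := by nlinarith
    by_cases hp2 : 2 < p
    · rw [if_pos hp2]
      have h5 : (0:ℝ) ≤ r^p := Real.rpow_nonneg hr0 p
      calc ‖_‖ ≤ 243 * r^p + 1 + p * r := htri
        _ ≤ 1000 * (r ^ 2 + r ^ p) := by nlinarith
    · rw [if_neg hp2]
      push_neg at hp2
      have hrp : r^p ≤ 2 * r^2 := by
        have h1 : r^p = r^(2:ℝ) * r^(p-2) := by
          rw [← Real.rpow_add (by linarith : 0 < r)]; ring_nf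
        have h2 : r^(p-2) ≤ (1/2 : ℝ)^(p-2) :=
          Real.rpow_le_rpow_of_nonpos (by norm_num) hlarge.le (by linarith)
        have h3 : (1/2 : ℝ)^(p-2) = (2:ℝ)^(2-p) := by
          rw [show (1/2 : ℝ) = 2⁻¹ by norm_num, ← Real.rpow_neg_one (2:ℝ),
            ← Real.rpow_mul (by norm_num : (0:ℝ) ≤ 2)]
          ring_nf
        have h4 : (2:ℝ)^(2-p) ≤ (2:ℝ)^(1:ℝ) :=
          Real.rpow_le_rpow_of_exponent_le (by norm_num) (by linarith)
        have h5 : (2:ℝ)^(1:ℝ) = 2 := Real.rpow_one 2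
        have h6 : r^(2:ℝ) = r^2 := Real.rpow_two r
        have h7 : (0:ℝ) ≤ r^(p-2) := Real.rpow_nonneg hr0 _
        rw [h1, h6]
        nlinarith
      calc ‖_‖ ≤ 243 * r^p + 1 + p * r := htri
        _ ≤ 1000 * (r ^ 2 + 0) := by nlinarith
end

section
/- (Second-order Taylor remainder estimate for the energy density.) Let 1 < p < 5 and F(u) = |u|^{p+1}/(p+1) for u ∈ ℂ. There exists a constant C = C(p) such that for all a ∈ ℂ \ {0} and z ∈ ℂ: |F(a+z) − F(a) − Re(f(a)·z̄) − (1/2)·( ((p−1)/4)|a|^{p−3}(ā²z² + a²z̄²) + ((p+1)/2)|a|^{p−1}|z|² )| ≤ C·(|z|^{p+1} + 𝟙_{p>2}·|a|^{p−2}|z|³), where f(a) = a|a|^{p−1} and 𝟙_{p>2} equals 1 if p > 2 and 0 otherwise. -/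
open Set


lemma sq_rpow (x : ℝ) (hx : 0 ≤ x) (e : ℝ) : (x^2 : ℝ) ^ e = x ^ (2*e) := by
  rw [← Real.rpow_natCast x 2, ← Real.rpow_mul hx]
  norm_num

lemma rpow_base6 (b x y e : ℝ) (hb : 1 ≤ b) (hx : 0 ≤ x) (hxy : x ≤ b*y)
    (h0 : 0 ≤ e) (he : e ≤ 6) : x ^ e ≤ b^(6:ℕ) * y ^ e := by
  have hy : 0 ≤ y := by nlinarith
  calc x^e ≤ (b*y)^e := Real.rpow_le_rpow hx hxy h0
    _ = b^e * y^e := Real.mul_rpow (by linarith) hy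
    _ ≤ b^(6:ℕ) * y^e := by
        have h1 : b^e ≤ b^(6:ℝ) := Real.rpow_le_rpow_of_exponent_le hb he
        have h2 : b^(6:ℝ) = b^(6:ℕ) := by
          rw [show (6:ℝ) = ((6:ℕ):ℝ) by norm_num, Real.rpow_natCast]
        rw [← h2]
        exact mul_le_mul_of_nonneg_right h1 (Real.rpow_nonneg hy e)


lemma normSq_line (a z : ℂ) (t : ℝ) : Complex.normSq (a + t*z)
    = Complex.normSq a + 2*(a.re*z.re + a.im*z.im)*t + Complex.normSq z * t^2 := by
  simp [Complex.normSq_apply, Complex.add_re, Complex.add_im, Complex.mul_re, Complex.mul_im,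
    Complex.ofReal_re, Complex.ofReal_im]
  ring

lemma re_inner (a z : ℂ) (t : ℝ) : ((starRingEnd ℂ (a + t*z)) * z).re
    = (a.re*z.re + a.im*z.im) + Complex.normSq z * t := by
  simp [Complex.normSq_apply, Complex.mul_re, Complex.add_re, Complex.add_im,
    Complex.conj_re, Complex.conj_im, Complex.mul_im, Complex.ofReal_re, Complex.ofReal_im]
  ring

lemma lagrange (a z : ℂ) : Complex.normSq a * Complex.normSq z
    = (a.re*z.re+a.im*z.im)^2 + (a.re*z.im - a.im*z.re)^2 := by
  simp [Complex.normSq_apply]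
  ring

lemma re_f (a z : ℂ) (c : ℝ) : (a * (c:ℂ) * starRingEnd ℂ z).re
    = c * (a.re*z.re + a.im*z.im) := by
  simp [Complex.mul_re, Complex.mul_im, Complex.conj_re, Complex.conj_im,
    Complex.ofReal_re, Complex.ofReal_im]
  ring

lemma re_quad (a z : ℂ) : ((starRingEnd ℂ a)^2 * z^2 + a^2*(starRingEnd ℂ z)^2).re
    = 2*((a.re*z.re+a.im*z.im)^2 - (a.re*z.im - a.im*z.re)^2) := by
  simp [pow_two, Complex.mul_re, Complex.mul_im, Complex.add_re, Complex.conj_re,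
    Complex.conj_im]
  ring

lemma normSq_rpow (w : ℂ) (e : ℝ) : (Complex.normSq w : ℝ) ^ (e/2) = ‖w‖ ^ e := by
  rw [← Complex.sq_norm, ← Real.rpow_natCast (‖w‖) 2,
    ← Real.rpow_mul (norm_nonneg w)]
  congr 1
  push_cast
  ring




lemma taylor2 (g g1 g2 g3 : ℝ → ℝ) (M : ℝ)
    (hg : ∀ t ∈ Icc (0:ℝ) 1, HasDerivWithinAt g (g1 t) (Icc 0 1) t)
    (hg1 : ∀ t ∈ Icc (0:ℝ) 1, HasDerivWithinAt g1 (g2 t) (Icc 0 1) t)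
    (hg2 : ∀ t ∈ Icc (0:ℝ) 1, HasDerivWithinAt g2 (g3 t) (Icc 0 1) t)
    (hM : ∀ t ∈ Icc (0:ℝ) 1, |g3 t| ≤ M) :
    |g 1 - g 0 - g1 0 - g2 0 / 2| ≤ M := by
  have h01 : (0:ℝ) ∈ Icc (0:ℝ) 1 := by norm_num
  have h11 : (1:ℝ) ∈ Icc (0:ℝ) 1 := by norm_num
  have hM0 : 0 ≤ M := le_trans (abs_nonneg _) (hM 0 h01)
  -- step 1: |g2 t - g2 0| ≤ M
  have step1 : ∀ t ∈ Icc (0:ℝ) 1, |g2 t - g2 0| ≤ M := by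
    intro t ht
    have := (convex_Icc (0:ℝ) 1).norm_image_sub_le_of_norm_hasDerivWithin_le hg2
      (fun x hx => by simpa using hM x hx) h01 ht
    calc |g2 t - g2 0| ≤ M * ‖t - 0‖ := this
    _ ≤ M * 1 := by
        refine mul_le_mul_of_nonneg_left ?_ hM0
        rw [Real.norm_eq_abs, sub_zero, abs_of_nonneg ht.1]; exact ht.2
    _ = M := mul_one M
  -- step 2: |g1 t - g1 0 - g2 0 * t| ≤ M
  have step2 : ∀ t ∈ Icc (0:ℝ) 1, |g1 t - g1 0 - g2 0 * t| ≤ M := by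
    intro t ht
    have hder : ∀ x ∈ Icc (0:ℝ) 1,
        HasDerivWithinAt (fun s => g1 s - g1 0 - g2 0 * s) (g2 x - g2 0) (Icc 0 1) x := by
      intro x hx
      exact (((hg1 x hx).sub_const (g1 0)).sub
        ((hasDerivWithinAt_id x _).const_mul (g2 0))).congr_deriv (by ring)
    have := (convex_Icc (0:ℝ) 1).norm_image_sub_le_of_norm_hasDerivWithin_le hder
      (fun x hx => by simpa using step1 x hx) h01 ht
    calc |g1 t - g1 0 - g2 0 * t| = ‖(g1 t - g1 0 - g2 0 * t) - (g1 0 - g1 0 - g2 0 * 0)‖ := by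
          rw [Real.norm_eq_abs]; ring_nf
    _ ≤ M * ‖t - 0‖ := this
    _ ≤ M := by
        rw [Real.norm_eq_abs, sub_zero, abs_of_nonneg ht.1]
        nlinarith [ht.2, ht.1]
  -- step 3
  have hder : ∀ x ∈ Icc (0:ℝ) 1,
      HasDerivWithinAt (fun s => g s - g 0 - g1 0 * s - g2 0 * s ^ 2 / 2)
        (g1 x - g1 0 - g2 0 * x) (Icc 0 1) x := by
    intro x hx
    have h1 : HasDerivWithinAt (fun s : ℝ => g2 0 * s ^ 2 / 2) (g2 0 * x) (Icc 0 1) x := by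
      have := ((hasDerivWithinAt_id x (Icc (0:ℝ) 1)).pow 2).const_mul (g2 0)
      have := this.div_const 2
      refine this.congr_deriv ?_
      simp; ring
    exact ((((hg x hx).sub_const (g 0)).sub
      ((hasDerivWithinAt_id x _).const_mul (g1 0))).sub h1).congr_deriv (by ring)
  have := (convex_Icc (0:ℝ) 1).norm_image_sub_le_of_norm_hasDerivWithin_le hder
    (fun x hx => by simpa using step2 x hx) h01 h11
  calc |g 1 - g 0 - g1 0 - g2 0 / 2|
      = ‖(g 1 - g 0 - g1 0 * 1 - g2 0 * 1 ^ 2 / 2) - (g 0 - g 0 - g1 0 * 0 - g2 0 * 0 ^ 2 / 2)‖ := by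
        rw [Real.norm_eq_abs]; ring_nf
    _ ≤ M * ‖(1:ℝ) - 0‖ := this
    _ = M := by simp


lemma key (p A B C2 M : ℝ) (hp1 : 1 < p)
    (hpos : ∀ t ∈ Icc (0:ℝ) 1, 0 < A + 2*B*t + C2*t^2)
    (hM : ∀ t ∈ Icc (0:ℝ) 1,
      |(p-1)*(p-3) * (A+2*B*t+C2*t^2) ^ ((p-5)/2) * (B + C2*t)^3
        + 3*(p-1) * (A+2*B*t+C2*t^2) ^ ((p-3)/2) * (B + C2*t) * C2| ≤ M) :
    |(A+2*B+C2) ^ ((p+1)/2)/(p+1) - A ^ ((p+1)/2)/(p+1) - A ^ ((p-1)/2) * B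
      - ((p-1)*A^((p-3)/2)*B^2 + A^((p-1)/2)*C2)/2| ≤ M := by
  set φ : ℝ → ℝ := fun t => A + 2*B*t + C2*t^2 with hφdef
  have hp0 : (0:ℝ) < p + 1 := by linarith
  have hφd : ∀ t : ℝ, HasDerivWithinAt φ (2*B + 2*C2*t) (Icc 0 1) t := by
    intro t
    have h1 : HasDerivAt (fun t : ℝ => A + 2*B*t + C2*t^2) (0 + 2*B*1 + C2*(2*t)) t := by
      exact (((hasDerivAt_const t A).add ((hasDerivAt_id t).const_mul (2*B))).add
        (((hasDerivAt_pow 2 t)).const_mul C2)).congr_deriv (by simp)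
    exact (h1.congr_deriv (by ring)).hasDerivWithinAt
  set g : ℝ → ℝ := fun t => φ t ^ ((p+1)/2) / (p+1) with hg_def
  set g1 : ℝ → ℝ := fun t => φ t ^ ((p-1)/2) * (B + C2*t) with hg1_def
  set g2 : ℝ → ℝ := fun t => (p-1) * φ t ^ ((p-3)/2) * (B + C2*t)^2 + φ t ^ ((p-1)/2) * C2
    with hg2_def
  set g3 : ℝ → ℝ := fun t => (p-1)*(p-3) * φ t ^ ((p-5)/2) * (B + C2*t)^3
    + 3*(p-1) * φ t ^ ((p-3)/2) * (B + C2*t) * C2 with hg3_def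
  have hlin : ∀ t : ℝ, HasDerivWithinAt (fun t => B + C2*t) C2 (Icc (0:ℝ) 1) t := by
    intro t
    exact (((hasDerivAt_id t).const_mul C2).const_add B).congr_deriv (by ring) |>.hasDerivWithinAt
  have hg : ∀ t ∈ Icc (0:ℝ) 1, HasDerivWithinAt g (g1 t) (Icc 0 1) t := by
    intro t ht
    have h := ((hφd t).rpow_const (p := (p+1)/2) (Or.inl (hpos t ht).ne')).div_const (p+1)
    refine h.congr_deriv ?_
    have he : (p+1)/2 - 1 = (p-1)/2 := by ring
    rw [hg1_def, he]
    field_simp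
  have hg1 : ∀ t ∈ Icc (0:ℝ) 1, HasDerivWithinAt g1 (g2 t) (Icc 0 1) t := by
    intro t ht
    have h := ((hφd t).rpow_const (p := (p-1)/2) (Or.inl (hpos t ht).ne')).mul (hlin t)
    refine h.congr_deriv ?_
    have he : (p-1)/2 - 1 = (p-3)/2 := by ring
    rw [hg2_def, he]
    ring
  have hg2 : ∀ t ∈ Icc (0:ℝ) 1, HasDerivWithinAt g2 (g3 t) (Icc 0 1) t := by
    intro t ht
    have hsq : HasDerivWithinAt (fun t => (B + C2*t)^2) (2*(B+C2*t)*C2) (Icc (0:ℝ) 1) t := by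
      have := (hlin t).pow 2
      refine this.congr_deriv ?_
      simp
    have h := ((((hφd t).rpow_const (p := (p-3)/2) (Or.inl (hpos t ht).ne')).mul hsq).const_mul
        (p-1)).add
      (((hφd t).rpow_const (p := (p-1)/2) (Or.inl (hpos t ht).ne')).mul_const C2)
    have hfun : g2 = fun y => (p-1) * (φ y ^ ((p-3)/2) * (B+C2*y)^2) + φ y ^ ((p-1)/2) * C2 := by
      funext y; rw [hg2_def]; ring
    rw [hfun] at *
    refine h.congr_deriv ?_
    have he1 : (p-3)/2 - 1 = (p-5)/2 := by ring
    have he2 : (p-1)/2 - 1 = (p-3)/2 := by ring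
    rw [hg3_def, he1, he2]
    ring
  have := taylor2 g g1 g2 g3 M hg hg1 hg2 (by intro t ht; exact hM t ht)
  convert this using 2 <;> simp [hg_def, hg1_def, hg2_def, hφdef] <;> ring_nf


lemma case1 (p : ℝ) (hp1 : 1 < p) (hp5 : p < 5) (a z : ℂ) (ha : a ≠ 0)
    (hcase : ‖a‖ ≤ 2 * ‖z‖) :
    |‖a + z‖ ^ (p + 1) / (p + 1) - ‖a‖ ^ (p + 1) / (p + 1)
          - (a * ((‖a‖ ^ (p - 1) : ℝ) : ℂ) * (starRingEnd ℂ z)).re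
          - (1 / 2) * ((p - 1) / 4 * ‖a‖ ^ (p - 3)
                * ((starRingEnd ℂ a) ^ 2 * z ^ 2 + a ^ 2 * (starRingEnd ℂ z) ^ 2).re
              + (p + 1) / 2 * ‖a‖ ^ (p - 1) * ‖z‖ ^ 2)|
        ≤ 2000 * ‖z‖ ^ (p + 1) := by
  set s := ‖a‖ with hs_def
  set r := ‖z‖ with hr_def
  have hs : 0 < s := norm_pos_iff.mpr ha
  have hr : 0 < r := by
    rcases lt_or_ge 0 r with h | h
    · exact h
    · exfalso; nlinarith
  set R := r ^ (p+1) with hR_def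
  have hR0 : 0 ≤ R := Real.rpow_nonneg hr.le _
  have hsum : ‖a+z‖ ≤ 3*r := by
    calc ‖a+z‖ ≤ s + r := norm_add_le a z
    _ ≤ 3*r := by linarith
  have f1 : ‖a+z‖ ^ (p+1) ≤ 729 * R := by
    have := rpow_base6 3 (‖a+z‖) r (p+1) (by norm_num)
      (norm_nonneg _) hsum (by linarith) (by linarith)
    norm_num at this; exact this
  have f2 : s ^ (p+1) ≤ 64 * R := by
    have := rpow_base6 2 s r (p+1) (by norm_num) hs.le hcase (by linarith) (by linarith)
    norm_num at this; exact this
  have f3 : s ^ p ≤ 64 * r ^ p := by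
    have := rpow_base6 2 s r p (by norm_num) hs.le hcase (by linarith) (by linarith)
    norm_num at this; exact this
  have f4 : s ^ (p-1) ≤ 64 * r ^ (p-1) := by
    have := rpow_base6 2 s r (p-1) (by norm_num) hs.le hcase (by linarith) (by linarith)
    norm_num at this; exact this
  have rmul : r ^ p * r = R := by
    rw [hR_def, Real.rpow_add hr p 1, Real.rpow_one]
  have rmul2 : r ^ (p-1) * r ^ (2:ℕ) = R := by
    rw [hR_def, ← Real.rpow_natCast r 2, ← Real.rpow_add hr]
    norm_num
    congr 1; ring
  have smul : s ^ (p-3) * s ^ (2:ℕ) = s ^ (p-1) := by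
    rw [← Real.rpow_natCast s 2, ← Real.rpow_add hs]
    norm_num
    congr 1; ring
  -- term bounds
  have hX1 : |‖a + z‖ ^ (p + 1) / (p + 1)| ≤ 729 * R := by
    rw [abs_of_nonneg (by positivity)]
    calc ‖a + z‖ ^ (p + 1) / (p + 1) ≤ ‖a + z‖ ^ (p + 1) :=
      div_le_self (by positivity) (by linarith)
    _ ≤ 729 * R := f1
  have hX2 : |s ^ (p + 1) / (p + 1)| ≤ 64 * R := by
    rw [abs_of_nonneg (by positivity)]
    calc s ^ (p + 1) / (p + 1) ≤ s ^ (p + 1) := div_le_self (by positivity) (by linarith)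
    _ ≤ 64 * R := f2
  have hX3 : |(a * ((s ^ (p - 1) : ℝ) : ℂ) * (starRingEnd ℂ z)).re| ≤ 64 * R := by
    calc |(a * ((s ^ (p - 1) : ℝ) : ℂ) * (starRingEnd ℂ z)).re|
        ≤ ‖a * ((s ^ (p - 1) : ℝ) : ℂ) * (starRingEnd ℂ z)‖ :=
          Complex.abs_re_le_norm _
    _ = s * s^(p-1) * r := by
        rw [norm_mul, norm_mul, Complex.norm_real, Real.norm_eq_abs, Complex.norm_conj,
          abs_of_nonneg (Real.rpow_nonneg hs.le _)]
    _ = s ^ p * r := by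
        congr 1
        rw [show s * s^(p-1) = s^(1:ℝ) * s^(p-1) by rw [Real.rpow_one],
          ← Real.rpow_add hs]
        norm_num
    _ ≤ 64 * (r ^ p * r) := by nlinarith [Real.rpow_nonneg hr.le p]
    _ = 64 * R := by rw [rmul]
  have hQ : |((starRingEnd ℂ a) ^ 2 * z ^ 2 + a ^ 2 * (starRingEnd ℂ z) ^ 2).re|
      ≤ 2 * (s^(2:ℕ) * r^(2:ℕ)) := by
    calc |((starRingEnd ℂ a) ^ 2 * z ^ 2 + a ^ 2 * (starRingEnd ℂ z) ^ 2).re|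
        ≤ ‖(starRingEnd ℂ a) ^ 2 * z ^ 2 + a ^ 2 * (starRingEnd ℂ z) ^ 2‖ :=
          Complex.abs_re_le_norm _
    _ ≤ ‖(starRingEnd ℂ a) ^ 2 * z ^ 2‖
        + ‖a ^ 2 * (starRingEnd ℂ z) ^ 2‖ := norm_add_le _ _
    _ = 2 * (s^(2:ℕ) * r^(2:ℕ)) := by
        rw [norm_mul, norm_mul, norm_pow, norm_pow, norm_pow, norm_pow,
          Complex.norm_conj, Complex.norm_conj]
        ring
  have h4a : s^(p-3) * |((starRingEnd ℂ a) ^ 2 * z ^ 2 + a ^ 2 * (starRingEnd ℂ z) ^ 2).re|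
      ≤ 128 * R := by
    calc s^(p-3) * |((starRingEnd ℂ a) ^ 2 * z ^ 2 + a ^ 2 * (starRingEnd ℂ z) ^ 2).re|
        ≤ s^(p-3) * (2 * (s^(2:ℕ) * r^(2:ℕ))) :=
          mul_le_mul_of_nonneg_left hQ (Real.rpow_nonneg hs.le _)
    _ = 2 * ((s^(p-3) * s^(2:ℕ)) * r^(2:ℕ)) := by ring
    _ = 2 * (s^(p-1) * r^(2:ℕ)) := by rw [smul]
    _ ≤ 2 * (64 * r^(p-1) * r^(2:ℕ)) := by
        have : (0:ℝ) ≤ r^(2:ℕ) := by positivity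
        nlinarith
    _ = 128 * R := by rw [show 64 * r^(p-1) * r^(2:ℕ) = 64 * (r^(p-1) * r^(2:ℕ)) by ring, rmul2]; ring
  have h4b : s^(p-1) * r^(2:ℕ) ≤ 64 * R := by
    calc s^(p-1) * r^(2:ℕ) ≤ 64 * r^(p-1) * r^(2:ℕ) := by
          have : (0:ℝ) ≤ r^(2:ℕ) := by positivity
          nlinarith
    _ = 64 * R := by rw [mul_assoc, rmul2]
  have hX4 : |(1 / 2) * ((p - 1) / 4 * s ^ (p - 3)
        * ((starRingEnd ℂ a) ^ 2 * z ^ 2 + a ^ 2 * (starRingEnd ℂ z) ^ 2).re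
      + (p + 1) / 2 * s ^ (p - 1) * r ^ 2)| ≤ 160 * R := by
    set Qre := ((starRingEnd ℂ a) ^ 2 * z ^ 2 + a ^ 2 * (starRingEnd ℂ z) ^ 2).re with hQre
    have habs : |(1 / 2) * ((p - 1) / 4 * s ^ (p - 3) * Qre + (p + 1) / 2 * s ^ (p - 1) * r ^ 2)|
        ≤ (1/2) * ((p-1)/4 * (s^(p-3) * |Qre|) + (p+1)/2 * (s^(p-1) * r^2)) := by
      rw [abs_mul]
      have h1 : |(p - 1) / 4 * s ^ (p - 3) * Qre + (p + 1) / 2 * s ^ (p - 1) * r ^ 2|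
          ≤ (p-1)/4 * (s^(p-3) * |Qre|) + (p+1)/2 * (s^(p-1) * r^2) := by
        calc |(p - 1) / 4 * s ^ (p - 3) * Qre + (p + 1) / 2 * s ^ (p - 1) * r ^ 2|
            ≤ |(p - 1) / 4 * s ^ (p - 3) * Qre| + |(p + 1) / 2 * s ^ (p - 1) * r ^ 2| :=
              abs_add_le _ _
        _ = (p-1)/4 * (s^(p-3) * |Qre|) + (p+1)/2 * (s^(p-1) * r^2) := by
            rw [abs_mul, abs_mul, abs_mul, abs_mul,
              abs_of_nonneg (show (0:ℝ) ≤ (p-1)/4 by linarith),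
              abs_of_nonneg (show (0:ℝ) ≤ (p+1)/2 by linarith),
              abs_of_nonneg (Real.rpow_nonneg hs.le (p-3)),
              abs_of_nonneg (Real.rpow_nonneg hs.le (p-1)),
              abs_of_nonneg (show (0:ℝ) ≤ r^2 by positivity)]
            ring
      rw [abs_of_nonneg (show (0:ℝ) ≤ 1/2 by norm_num)]
      linarith
    refine habs.trans ?_
    have hu : (p-1)/4 * (s^(p-3) * |Qre|) ≤ 1 * (128 * R) := by
      refine mul_le_mul (by linarith) h4a ?_ (by norm_num)
      exact mul_nonneg (Real.rpow_nonneg hs.le _) (abs_nonneg _)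
    have hv : (p+1)/2 * (s^(p-1) * r^2) ≤ 3 * (64 * R) := by
      refine mul_le_mul (by linarith) h4b ?_ (by norm_num)
      positivity
    linarith
  -- combine
  have tri : |‖a + z‖ ^ (p + 1) / (p + 1) - s ^ (p + 1) / (p + 1)
          - (a * ((s ^ (p - 1) : ℝ) : ℂ) * (starRingEnd ℂ z)).re
          - (1 / 2) * ((p - 1) / 4 * s ^ (p - 3)
                * ((starRingEnd ℂ a) ^ 2 * z ^ 2 + a ^ 2 * (starRingEnd ℂ z) ^ 2).re
              + (p + 1) / 2 * s ^ (p - 1) * r ^ 2)|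
      ≤ |‖a + z‖ ^ (p + 1) / (p + 1)| + |s ^ (p + 1) / (p + 1)|
        + |(a * ((s ^ (p - 1) : ℝ) : ℂ) * (starRingEnd ℂ z)).re|
        + |(1 / 2) * ((p - 1) / 4 * s ^ (p - 3)
                * ((starRingEnd ℂ a) ^ 2 * z ^ 2 + a ^ 2 * (starRingEnd ℂ z) ^ 2).re
              + (p + 1) / 2 * s ^ (p - 1) * r ^ 2)| := by
    refine (abs_sub _ _).trans ?_
    refine add_le_add ((abs_sub _ _).trans ?_) le_rfl
    exact add_le_add (abs_sub _ _) le_rfl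
  calc _ ≤ _ := tri
  _ ≤ 729*R + 64*R + 64*R + 160*R := by
      refine add_le_add (add_le_add (add_le_add hX1 hX2) hX3) hX4
  _ ≤ 2000 * R := by linarith


set_option maxHeartbeats 1000000 in
lemma case2 (p : ℝ) (hp1 : 1 < p) (hp5 : p < 5) (a z : ℂ) (ha : a ≠ 0)
    (hcase : 2 * ‖z‖ ≤ ‖a‖) :
    |‖a + z‖ ^ (p + 1) / (p + 1) - ‖a‖ ^ (p + 1) / (p + 1)
          - (a * ((‖a‖ ^ (p - 1) : ℝ) : ℂ) * (starRingEnd ℂ z)).re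
          - (1 / 2) * ((p - 1) / 4 * ‖a‖ ^ (p - 3)
                * ((starRingEnd ℂ a) ^ 2 * z ^ 2 + a ^ 2 * (starRingEnd ℂ z) ^ 2).re
              + (p + 1) / 2 * ‖a‖ ^ (p - 1) * ‖z‖ ^ 2)|
        ≤ 160 * ‖a‖ ^ (p-2) * ‖z‖ ^ 3 := by
  set s := ‖a‖ with hs_def
  set r := ‖z‖ with hr_def
  have hs : 0 < s := norm_pos_iff.mpr ha
  have hr0 : 0 ≤ r := norm_nonneg z
  set A := Complex.normSq a with hA_def
  set B := a.re*z.re + a.im*z.im with hB_def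
  set C2 := Complex.normSq z with hC2_def
  set D := a.re*z.im - a.im*z.re with hD_def
  -- bounds on |a + t z|
  have hlow : ∀ t ∈ Icc (0:ℝ) 1, s/2 ≤ ‖a + t*z‖ := by
    intro t ht
    have h := norm_sub_le (a + (t:ℂ)*z) ((t:ℂ)*z)
    rw [add_sub_cancel_right] at h
    have htz : ‖(t:ℂ)*z‖ ≤ r := by
      rw [norm_mul, Complex.norm_real, Real.norm_eq_abs, abs_of_nonneg ht.1]
      calc t * ‖z‖ ≤ 1 * ‖z‖ := by
            exact mul_le_mul_of_nonneg_right ht.2 (norm_nonneg z)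
      _ = r := by rw [one_mul, hr_def]
    have : s ≤ ‖a + t*z‖ + r := by
      calc s = ‖a‖ := hs_def
      _ ≤ ‖a + ↑t*z‖ + ‖↑t*z‖ := h
      _ ≤ ‖a + ↑t*z‖ + r := by linarith
    linarith
  have hupp : ∀ t ∈ Icc (0:ℝ) 1, ‖a + t*z‖ ≤ 2*s := by
    intro t ht
    calc ‖a + t*z‖ ≤ ‖a‖ + ‖(t:ℂ)*z‖ :=
          norm_add_le _ _
    _ ≤ s + r := by
        rw [norm_mul, Complex.norm_real, Real.norm_eq_abs, abs_of_nonneg ht.1]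
        have : t * r ≤ 1 * r := mul_le_mul_of_nonneg_right ht.2 hr0
        simp only [hs_def]
        nlinarith
    _ ≤ 2*s := by linarith
  have hpos : ∀ t ∈ Icc (0:ℝ) 1, 0 < A + 2*B*t + C2*t^2 := by
    intro t ht
    have := hlow t ht
    have h2 : 0 < ‖a + t*z‖ := by linarith
    rw [hA_def, hB_def, hC2_def, ← normSq_line]
    exact Complex.normSq_pos.mpr (by simpa using norm_pos_iff.mp h2)
  have hBle : ∀ t ∈ Icc (0:ℝ) 1, |B + C2*t| ≤ ‖a + t*z‖ * r := by
    intro t ht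
    have h1 : B + C2*t = ((starRingEnd ℂ (a + t*z)) * z).re := by
      rw [re_inner, hB_def, hC2_def]
    rw [h1]
    calc |((starRingEnd ℂ (a + t*z)) * z).re| ≤ ‖(starRingEnd ℂ (a + t*z)) * z‖ :=
          Complex.abs_re_le_norm _
    _ = ‖a + t*z‖ * r := by rw [norm_mul, Complex.norm_conj]
  -- the third-derivative bound
  have hM : ∀ t ∈ Icc (0:ℝ) 1,
      |(p-1)*(p-3) * (A+2*B*t+C2*t^2) ^ ((p-5)/2) * (B + C2*t)^3
        + 3*(p-1) * (A+2*B*t+C2*t^2) ^ ((p-3)/2) * (B + C2*t) * C2|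
      ≤ 160 * s^(p-2) * r^3 := by
    intro t ht
    set u := ‖a + t*z‖ with hu_def
    have hu0 : 0 < u := lt_of_lt_of_le (half_pos hs) (hlow t ht)
    have hphi : A+2*B*t+C2*t^2 = u^(2:ℕ) := by
      rw [hA_def, hB_def, hC2_def, ← normSq_line, ← Complex.sq_norm]
    have hphi5 : (A+2*B*t+C2*t^2) ^ ((p-5)/2) = u^(p-5) := by
      rw [hphi, sq_rpow u hu0.le, show 2*((p-5)/2) = p-5 by ring]
    have hphi3 : (A+2*B*t+C2*t^2) ^ ((p-3)/2) = u^(p-3) := by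
      rw [hphi, sq_rpow u hu0.le, show 2*((p-3)/2) = p-3 by ring]
    have hW : |B + C2*t| ≤ u * r := hBle t ht
    have hC2r : C2 = r^2 := by rw [hC2_def, hr_def, Complex.sq_norm]
    have hkey8 : u^(p-2) ≤ 8 * s^(p-2) := by
      rcases le_or_gt 2 p with h2p | h2p
      · calc u^(p-2) ≤ (2*s)^(p-2) := Real.rpow_le_rpow hu0.le (hupp t ht) (by linarith)
        _ = 2^(p-2) * s^(p-2) := Real.mul_rpow (by norm_num) hs.le
        _ ≤ 8 * s^(p-2) := by
            have h1 : (2:ℝ)^(p-2) ≤ 2^(3:ℝ) :=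
              Real.rpow_le_rpow_of_exponent_le one_le_two (by linarith)
            have h2 : (2:ℝ)^(3:ℝ) = 8 := by
              rw [show (3:ℝ) = ((3:ℕ):ℝ) by norm_num, Real.rpow_natCast]; norm_num
            have h3 := Real.rpow_nonneg hs.le (p-2)
            nlinarith
      · calc u^(p-2) ≤ (s/2)^(p-2) :=
            Real.rpow_le_rpow_of_nonpos (by positivity) (hlow t ht) (by linarith)
        _ = s^(p-2) / 2^(p-2) := Real.div_rpow hs.le (by norm_num) _
        _ ≤ 8 * s^(p-2) := by
            have h12 : (1/2:ℝ) ≤ (2:ℝ)^(p-2) := by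
              have h1 : (2:ℝ)^(-1:ℝ) ≤ (2:ℝ)^(p-2) :=
                Real.rpow_le_rpow_of_exponent_le one_le_two (by linarith)
              have h2 : (2:ℝ)^(-1:ℝ) = 1/2 := by
                rw [Real.rpow_neg (by norm_num), Real.rpow_one]; norm_num
              rw [← h2]; exact h1
            have h3 := Real.rpow_nonneg hs.le (p-2)
            rw [div_le_iff₀ (by linarith)]
            nlinarith [mul_le_mul_of_nonneg_left h12 (by positivity : (0:ℝ) ≤ 8 * s^(p-2))]
    have hup2 : 0 ≤ u^(p-2) := Real.rpow_nonneg hu0.le _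
    have hr3 : (0:ℝ) ≤ r^3 := by positivity
    -- |T1| bound
    have hu53 : u^(p-5) * u^(3:ℕ) = u^(p-2) := by
      rw [← Real.rpow_natCast u 3, ← Real.rpow_add hu0]
      congr 1; push_cast; ring
    have hu31 : u^(p-3) * u = u^(p-2) := by
      nth_rewrite 2 [← Real.rpow_one u]
      rw [← Real.rpow_add hu0]
      congr 1; ring
    have hT1 : |(p-1)*(p-3) * (A+2*B*t+C2*t^2) ^ ((p-5)/2) * (B + C2*t)^3|
        ≤ 8 * (u^(p-2) * r^3) := by
      rw [hphi5, abs_mul, abs_mul, abs_of_nonneg (Real.rpow_nonneg hu0.le (p-5)), abs_pow]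
      have hW3 : |B + C2*t|^3 ≤ (u*r)^3 := by
        exact pow_le_pow_left₀ (abs_nonneg _) hW 3
      have hc : |(p-1)*(p-3)| ≤ 8 := by
        rw [abs_mul]
        have : |p-1| ≤ 4 := by rw [abs_le]; constructor <;> linarith
        have : |p-3| ≤ 2 := by rw [abs_le]; constructor <;> linarith
        nlinarith [abs_nonneg (p-1), abs_nonneg (p-3)]
      have h5 : (0:ℝ) ≤ u^(p-5) := Real.rpow_nonneg hu0.le _
      have h7 : (0:ℝ) ≤ |B+C2*t|^3 := by positivity
      calc |(p-1)*(p-3)| * u^(p-5) * |B + C2*t|^3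
          ≤ (8 * u^(p-5)) * |B + C2*t|^3 := by
            refine mul_le_mul_of_nonneg_right ?_ h7
            exact mul_le_mul_of_nonneg_right hc h5
      _ ≤ (8 * u^(p-5)) * (u*r)^3 := by
            refine mul_le_mul_of_nonneg_left hW3 (by positivity)
      _ = 8 * u^(p-5) * (u*r)^3 := by ring
      _ = 8 * ((u^(p-5) * u^(3:ℕ)) * r^3) := by rw [mul_pow]; ring
      _ = 8 * (u^(p-2) * r^3) := by rw [hu53]
    have hT2 : |3*(p-1) * (A+2*B*t+C2*t^2) ^ ((p-3)/2) * (B + C2*t) * C2|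
        ≤ 12 * (u^(p-2) * r^3) := by
      rw [hphi3, abs_mul, abs_mul, abs_mul, abs_of_nonneg (Real.rpow_nonneg hu0.le (p-3)),
        abs_of_nonneg (Complex.normSq_nonneg z : (0:ℝ) ≤ C2)]
      have hc : |3*(p-1)| ≤ 12 := by
        rw [abs_of_nonneg (by linarith : (0:ℝ) ≤ 3*(p-1))]; linarith
      have h5 : (0:ℝ) ≤ u^(p-3) := Real.rpow_nonneg hu0.le _
      have hC2nn : (0:ℝ) ≤ C2 := Complex.normSq_nonneg z
      calc |3*(p-1)| * u^(p-3) * |B + C2*t| * C2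
          ≤ (12 * u^(p-3)) * |B + C2*t| * C2 := by
            refine mul_le_mul_of_nonneg_right (mul_le_mul_of_nonneg_right ?_ (abs_nonneg _))
              hC2nn
            exact mul_le_mul_of_nonneg_right hc h5
      _ ≤ (12 * u^(p-3)) * (u*r) * C2 := by
            refine mul_le_mul_of_nonneg_right (mul_le_mul_of_nonneg_left hW (by positivity))
              hC2nn
      _ = 12 * ((u^(p-3) * u) * r^3) := by rw [hC2r]; ring
      _ = 12 * (u^(p-2) * r^3) := by rw [hu31]
    calc |(p-1)*(p-3) * (A+2*B*t+C2*t^2) ^ ((p-5)/2) * (B + C2*t)^3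
        + 3*(p-1) * (A+2*B*t+C2*t^2) ^ ((p-3)/2) * (B + C2*t) * C2|
        ≤ |(p-1)*(p-3) * (A+2*B*t+C2*t^2) ^ ((p-5)/2) * (B + C2*t)^3|
          + |3*(p-1) * (A+2*B*t+C2*t^2) ^ ((p-3)/2) * (B + C2*t) * C2| := abs_add_le _ _
    _ ≤ 8 * (u^(p-2) * r^3) + 12 * (u^(p-2) * r^3) := add_le_add hT1 hT2
    _ = 20 * (u^(p-2) * r^3) := by ring
    _ ≤ 20 * ((8 * s^(p-2)) * r^3) := by
        refine mul_le_mul_of_nonneg_left (mul_le_mul_of_nonneg_right hkey8 hr3) (by norm_num)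
    _ = 160 * s^(p-2) * r^3 := by ring
  -- apply key
  have hkey := key p A B C2 (160 * s^(p-2) * r^3) hp1 hpos hM
  -- rewrite hkey into the goal's form
  have E1 : (A+2*B+C2) ^ ((p+1)/2) = ‖a+z‖ ^ (p+1) := by
    have h1 : A + 2*B + C2 = Complex.normSq (a + z) := by
      have := normSq_line a z 1
      rw [hA_def, hB_def, hC2_def]
      push_cast at this
      rw [one_mul] at this
      linarith [this]
    rw [h1, normSq_rpow]
  have E2 : A ^ ((p+1)/2) = s^(p+1) := by rw [hA_def, hs_def]; exact normSq_rpow a (p+1)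
  have E3 : A ^ ((p-1)/2) = s^(p-1) := by rw [hA_def, hs_def]; exact normSq_rpow a (p-1)
  have E4 : A ^ ((p-3)/2) = s^(p-3) := by rw [hA_def, hs_def]; exact normSq_rpow a (p-3)
  have E5 : s^(p-1) * B = (a * ((s ^ (p - 1) : ℝ) : ℂ) * (starRingEnd ℂ z)).re := by
    rw [re_f, hB_def]
  have E8 : s^(p-1) = s^(p-3) * s^2 := by
    rw [← Real.rpow_natCast s 2, ← Real.rpow_add hs]
    congr 1; push_cast; ring
  have E9 : s^2 * r^2 = B^2 + D^2 := by
    rw [hs_def, hr_def, Complex.sq_norm, Complex.sq_norm, hB_def, hD_def]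
    exact lagrange a z
  have hC2r : C2 = r^2 := by rw [hC2_def, hr_def, Complex.sq_norm]
  have E10 : ((p-1)*s^(p-3)*B^2 + s^(p-1)*C2)/2
      = (1 / 2) * ((p - 1) / 4 * s ^ (p - 3)
            * ((starRingEnd ℂ a) ^ 2 * z ^ 2 + a ^ 2 * (starRingEnd ℂ z) ^ 2).re
          + (p + 1) / 2 * s ^ (p - 1) * r ^ 2) := by
    rw [re_quad, ← hB_def, ← hD_def, hC2r, E8]
    linear_combination (-(p-1)/4 * s^(p-3)) * E9
  rw [E1, E2, E3, E4, E5] at hkey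
  rw [E8] at hkey
  rw [← E8] at hkey
  calc |‖a + z‖ ^ (p + 1) / (p + 1) - s ^ (p + 1) / (p + 1)
          - (a * ((s ^ (p - 1) : ℝ) : ℂ) * (starRingEnd ℂ z)).re
          - (1 / 2) * ((p - 1) / 4 * s ^ (p - 3)
                * ((starRingEnd ℂ a) ^ 2 * z ^ 2 + a ^ 2 * (starRingEnd ℂ z) ^ 2).re
              + (p + 1) / 2 * s ^ (p - 1) * r ^ 2)|
      = |‖a + z‖ ^ (p + 1) / (p + 1) - s ^ (p + 1) / (p + 1)
          - (a * ((s ^ (p - 1) : ℝ) : ℂ) * (starRingEnd ℂ z)).re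
          - ((p-1)*s^(p-3)*B^2 + s^(p-1)*C2)/2| := by rw [E10]
  _ ≤ 160 * s^(p-2) * r^3 := hkey




/-- second-order Taylor remainder estimate for the energy density
`F(u) = |u|^{p+1}/(p+1)`: for `1 < p < 5` there is `C = C(p)` such that for all
`a ∈ ℂ \ {0}` and `z ∈ ℂ`,
`|F(a+z) - F(a) - Re(f(a)z̄) - (1/2)(((p-1)/4)|a|^{p-3}(ā²z² + a²z̄²)
  + ((p+1)/2)|a|^{p-1}|z|²)| ≤ C(|z|^{p+1} + 𝟙_{p>2}|a|^{p-2}|z|³)`,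
where `f(a) = a|a|^{p-1}`. -/
theorem stmt19 (p : ℝ) (hp1 : 1 < p) (hp5 : p < 5) :
    ∃ C : ℝ, 0 < C ∧ ∀ a z : ℂ, a ≠ 0 →
      |‖a + z‖ ^ (p + 1) / (p + 1) - ‖a‖ ^ (p + 1) / (p + 1)
          - (a * ((‖a‖ ^ (p - 1) : ℝ) : ℂ) * (starRingEnd ℂ z)).re
          - (1 / 2) * ((p - 1) / 4 * ‖a‖ ^ (p - 3)
                * ((starRingEnd ℂ a) ^ 2 * z ^ 2 + a ^ 2 * (starRingEnd ℂ z) ^ 2).re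
              + (p + 1) / 2 * ‖a‖ ^ (p - 1) * ‖z‖ ^ 2)|
        ≤ C * (‖z‖ ^ (p + 1)
            + if 2 < p then ‖a‖ ^ (p - 2) * ‖z‖ ^ 3 else 0) := by
  refine ⟨20000, by norm_num, ?_⟩
  intro a z ha
  by_cases hz : z = 0
  · subst hz
    simp only [add_zero, map_zero, mul_zero, zero_pow, Complex.zero_re, ne_eq,
      OfNat.ofNat_ne_zero, not_false_eq_true, Complex.zero_im, sub_self, norm_zero]
    rw [Real.zero_rpow (show p+1 ≠ 0 by linarith)]
    simp
  · rcases le_total (‖a‖) (2*‖z‖) with hc | hc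
    · have h := case1 p hp1 hp5 a z ha hc
      have hR : 0 ≤ ‖z‖ ^ (p+1) := Real.rpow_nonneg (norm_nonneg z) _
      have hite : 0 ≤ (if 2 < p then ‖a‖ ^ (p-2) * ‖z‖ ^ 3 else 0) := by
        split
        · positivity
        · exact le_refl 0
      refine h.trans ?_
      nlinarith
    · have h := case2 p hp1 hp5 a z ha hc
      refine h.trans ?_
      have hR : 0 ≤ ‖z‖ ^ (p+1) := Real.rpow_nonneg (norm_nonneg z) _
      by_cases hp2 : 2 < p
      · rw [if_pos hp2]
        have h1 : 0 ≤ ‖a‖ ^ (p-2) * ‖z‖ ^ 3 := by positivity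
        nlinarith
      · rw [if_neg hp2]
        push_neg at hp2
        have hr : 0 < ‖z‖ := norm_pos_iff.mpr hz
        have hsr : ‖a‖ ^ (p-2) ≤ ‖z‖ ^ (p-2) := by
          calc ‖a‖ ^ (p-2) ≤ (2*‖z‖)^(p-2) :=
                Real.rpow_le_rpow_of_nonpos (by positivity) hc (by linarith)
          _ = 2^(p-2) * ‖z‖ ^ (p-2) := Real.mul_rpow (by norm_num) hr.le
          _ ≤ 1 * ‖z‖ ^ (p-2) := by
              have h1 : (2:ℝ)^(p-2) ≤ (2:ℝ)^(0:ℝ) :=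
                Real.rpow_le_rpow_of_exponent_le one_le_two (by linarith)
              rw [Real.rpow_zero] at h1
              exact mul_le_mul_of_nonneg_right h1 (Real.rpow_nonneg hr.le _)
          _ = ‖z‖ ^ (p-2) := one_mul _
        have hzz : ‖z‖ ^ (p-2) * ‖z‖ ^ (3:ℕ) = ‖z‖ ^ (p+1) := by
          rw [← Real.rpow_natCast (‖z‖) 3, ← Real.rpow_add hr]
          congr 1; push_cast; ring
        calc 160 * ‖a‖ ^ (p-2) * ‖z‖ ^ 3
            ≤ 160 * ‖z‖ ^ (p-2) * ‖z‖ ^ 3 := by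
              refine mul_le_mul_of_nonneg_right
                (mul_le_mul_of_nonneg_left hsr (by norm_num)) (by positivity)
        _ = 160 * ‖z‖ ^ (p+1) := by rw [mul_assoc, hzz]
        _ ≤ 20000 * (‖z‖ ^ (p+1) + 0) := by nlinarith
end
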